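/- arXiv:1402.6861 — 3 statements merged into one kernel-verified Lean document; each statement's English description precedes it below -/
import Mathlib

section
/- Let A = ⊕_{i=0}^{2n} A^i be a graded commutative ℝ-algebra with zero differential satisfying the hard Lefschetz property with respect to ω ∈ A^2, and let (A ⊗ Λ(y), d) be the elementary extension with dy = ω. Then every defined higher-order Massey product ⟨a1, …, a_m⟩ with m ≥ 4 of cohomology classes a_i ∈ H^*(A ⊗ Λ(y), d) contains 0. -/
/-! Hard Lefschetz makes every diagonal entry of a defining system "pure". A cocycle
`a + b y` of degree `p ≤ n` has `b ω = 0` with `deg b = p - 1 < n`, so `b = 0`; one of degree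
`p > n` has `a = ξ ω`, so `a = d(ε ξ · y)` is exact and may be dropped. Each diagonal entry
then lies in `A` or in `A y`, and one finds a new defining system supported on the diagonal
and on the superdiagonal, the latter consisting of multiples of `y`. Since `y² = 0`, all its
entries `γ'_{ij}` with `j ≥ i + 2` vanish, and for `m ≥ 4` so does every term of the Massey
cocycle. -/

/-- Product in the elementary extension `A ⊗ Λ(y)` of a graded algebra `A` with zero
differential (`deg y = 1`, `y² = 0`, `y·α = ε(α)·y`): a pair `(α, β)` stands for `α + β·y`
and `(α₁ + β₁y)(α₂ + β₂y) = α₁α₂ + (α₁β₂ + β₁ ε(α₂))y`, where `ε` is the parity involution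
`ε(α) = (-1)^{|α|} α`. -/
def emul {A : Type*} [Ring A] [Algebra ℝ A] (ε : A →ₗ[ℝ] A) (u v : A × A) : A × A :=
  (u.1 * v.1, u.1 * v.2 + u.2 * ε v.1)

/-- Differential of the elementary extension `(A ⊗ Λ(y), dy = ω)`: `d(α + β·y) = ε(β)·ω`. -/
def eD {A : Type*} [Ring A] [Algebra ℝ A] (ε : A →ₗ[ℝ] A) (ω : A) (u : A × A) : A × A :=
  (ε u.2 * ω, 0)

section ElementaryExtension

variable {A : Type*} [Ring A] [Algebra ℝ A] (ε : A →ₗ[ℝ] A) (ω : A)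

@[simp]
lemma eD_zero : eD ε ω 0 = 0 := by
  simp [eD]

lemma emul_eq_zero_of_fst_eq_zero {x y : A × A} (hx : x.1 = 0) (hy : y.1 = 0) :
    emul ε x y = 0 := by
  simp [emul, hx, hy]

/-- The right-hand side of the defining equation for `γ i j`; for `(i, j) = (1, m)` it is the
Massey cocycle. -/
def masseySum (D : ℕ → ℕ → ℕ) (γ : ℕ → ℕ → A × A) (i j : ℕ) : A × A :=
  ∑ k ∈ Finset.Ico i j, ((-1 : ℝ) ^ (D i k)) • emul ε (γ i k) (γ (k + 1) j)

variable (D : ℕ → ℕ → ℕ) (γ : ℕ → ℕ → A × A) (i : ℕ)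

@[simp]
lemma masseySum_self : masseySum ε D γ i i = 0 := by
  simp [masseySum]

lemma masseySum_succ :
    masseySum ε D γ i (i + 1) = ((-1 : ℝ) ^ (D i i)) • emul ε (γ i i) (γ (i + 1) (i + 1)) := by
  simp [masseySum]

lemma masseySum_add_two :
    masseySum ε D γ i (i + 2) =
      ((-1 : ℝ) ^ (D i i)) • emul ε (γ i i) (γ (i + 1) (i + 2)) +
        ((-1 : ℝ) ^ (D i (i + 1))) • emul ε (γ i (i + 1)) (γ (i + 2) (i + 2)) := by
  rw [masseySum, Finset.sum_Ico_succ_top (by omega), Nat.Ico_succ_singleton,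
    Finset.sum_singleton]

end ElementaryExtension

section Bidiagonal

variable {A : Type*}

def bidiagSystem [Zero A] (c : ℕ → A × A) (u : ℕ → A) (i j : ℕ) : A × A :=
  if j = i then c i else if j = i + 1 then (0, u i) else 0

variable [Ring A] {c : ℕ → A × A} {u : ℕ → A} {i j : ℕ}

lemma fst_bidiagSystem_of_ne (h : j ≠ i) : (bidiagSystem c u i j).1 = 0 := by
  unfold bidiagSystem
  split_ifs <;> simp_all

lemma bidiagSystem_of_add_two_le (h : i + 2 ≤ j) : bidiagSystem c u i j = 0 := by
  rw [bidiagSystem, if_neg (by omega), if_neg (by omega)]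

variable [Algebra ℝ A] (ε : A →ₗ[ℝ] A) (ω : A)

lemma masseySum_bidiagSystem_of_add_three_le (D : ℕ → ℕ → ℕ) (h : i + 3 ≤ j) :
    masseySum ε D (bidiagSystem c u) i j = 0 := by
  refine Finset.sum_eq_zero fun k hk => ?_
  rw [Finset.mem_Ico] at hk
  -- `y² = 0`: away from the ends both factors are multiples of `y`
  suffices emul ε (bidiagSystem c u i k) (bidiagSystem c u (k + 1) j) = 0 by simp [this]
  obtain rfl | hki := eq_or_ne i k
  · rw [bidiagSystem_of_add_two_le (i := i + 1) (j := j) (by omega)]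
    simp [emul]
  obtain hkj | hkj := eq_or_ne (k + 1) j
  · rw [bidiagSystem_of_add_two_le (i := i) (j := k) (by omega)]
    simp [emul]
  exact emul_eq_zero_of_fst_eq_zero ε (fst_bidiagSystem_of_ne (Ne.symm hki))
    (fst_bidiagSystem_of_ne (Ne.symm hkj))

theorem eD_bidiagSystem_eq_masseySum {D : ℕ → ℕ → ℕ} {m : ℕ}
    (hc : ∀ i, 1 ≤ i → i ≤ m → eD ε ω (c i) = 0)
    (hu : ∀ i, 1 ≤ i → i + 1 ≤ m →
      eD ε ω (0, u i) = ((-1 : ℝ) ^ (D i i)) • emul ε (c i) (c (i + 1)))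
    (hu₂ : ∀ i, 1 ≤ i → i + 2 ≤ m →
      ((-1 : ℝ) ^ (D i i)) • emul ε (c i) (0, u (i + 1)) +
        ((-1 : ℝ) ^ (D i (i + 1))) • emul ε (0, u i) (c (i + 2)) = 0)
    (hi : 1 ≤ i) (hij : i ≤ j) (hj : j ≤ m) :
    eD ε ω (bidiagSystem c u i j) = masseySum ε D (bidiagSystem c u) i j := by
  obtain rfl | rfl | rfl | h := (by omega : i = j ∨ j = i + 1 ∨ j = i + 2 ∨ i + 3 ≤ j)
  · simp [bidiagSystem, hc i hi hj]
  · simp [masseySum_succ, bidiagSystem, hu i hi hj]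
  · simp [masseySum_add_two, bidiagSystem, hu₂ i hi hj]
  · rw [bidiagSystem_of_add_two_le (by omega), masseySum_bidiagSystem_of_add_three_le ε D h,
      eD_zero]

end Bidiagonal

section Lefschetz

variable {A : Type*} [Ring A] [Algebra ℝ A] {𝒜 : ℕ → Submodule ℝ A} {n : ℕ} {ω : A}

def HardLefschetz (𝒜 : ℕ → Submodule ℝ A) (n : ℕ) (ω : A) : Prop :=
  ∀ k ≤ n, ∀ z ∈ 𝒜 (n + k), ∃! β, β ∈ 𝒜 (n - k) ∧ β * ω ^ k = z

lemma HardLefschetz.eq_zero_of_mul_eq_zero (hLef : HardLefschetz 𝒜 n ω)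
    {q : ℕ} {β : A} (hβ : β ∈ 𝒜 q) (hq : q < n) (h : β * ω = 0) : β = 0 := by
  obtain ⟨β₀, -, huniq⟩ := hLef (n - q) (Nat.sub_le n q) 0 (zero_mem _)
  have hβ' : β ∈ 𝒜 (n - (n - q)) := by rwa [Nat.sub_sub_self hq.le]
  have hpow : β * ω ^ (n - q) = 0 := by
    rw [← Nat.succ_pred_eq_of_pos (Nat.sub_pos_of_lt hq), pow_succ', ← mul_assoc, h, zero_mul]
  rw [huniq β ⟨hβ', hpow⟩, huniq 0 ⟨zero_mem _, zero_mul _⟩]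

lemma HardLefschetz.exists_mem_mul_eq [SetLike.GradedMonoid 𝒜] (hLef : HardLefschetz 𝒜 n ω)
    (hω : ω ∈ 𝒜 2) (hbound : ∀ i, 2 * n < i → 𝒜 i = ⊥)
    {q : ℕ} {a : A} (ha : a ∈ 𝒜 q) (hq : n < q) : ∃ ξ ∈ 𝒜 (q - 2), ξ * ω = a := by
  by_cases hq' : q ≤ 2 * n
  · obtain ⟨β, ⟨hβ, rfl⟩, -⟩ :=
      hLef (q - n) (by omega) a (by rwa [show n + (q - n) = q by omega])
    refine ⟨β * ω ^ (q - n - 1), ?_, ?_⟩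
    · convert SetLike.mul_mem_graded hβ (SetLike.pow_mem_graded (q - n - 1) hω) using 2
      simp only [smul_eq_mul]
      omega
    · rw [mul_assoc, ← pow_succ, show q - n - 1 + 1 = q - n by omega]
  · rw [hbound q (by omega), Submodule.mem_bot] at ha
    exact ⟨0, zero_mem _, by rw [ha, zero_mul]⟩

lemma snd_mul_eq_zero_of_eD_eq_zero {ε : A →ₗ[ℝ] A}
    (hε : ∀ i, ∀ v ∈ 𝒜 i, ε v = ((-1 : ℝ) ^ i) • v) {q : ℕ} {x : A × A} (hx : x.2 ∈ 𝒜 q)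
    (h : eD ε ω x = 0) : x.2 * ω = 0 := by
  simpa [eD, hε q _ hx, smul_mul_assoc] using congrArg Prod.fst h

lemma HardLefschetz.exists_eD_eq [SetLike.GradedMonoid 𝒜] (hLef : HardLefschetz 𝒜 n ω)
    (hω : ω ∈ 𝒜 2) (hbound : ∀ i, 2 * n < i → 𝒜 i = ⊥) {ε : A →ₗ[ℝ] A}
    (hε : ∀ i, ∀ v ∈ 𝒜 i, ε v = ((-1 : ℝ) ^ i) • v)
    {q : ℕ} {a : A} (ha : a ∈ 𝒜 q) (hq : n < q) : ∃ v, eD ε ω v = (a, 0) := by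
  obtain ⟨ξ, hξ, rfl⟩ := hLef.exists_mem_mul_eq hω hbound ha hq
  refine ⟨(0, ε ξ), ?_⟩
  simp [eD, hε _ _ hξ, smul_smul, ← mul_pow]

end Lefschetz

section Reduction

variable {A : Type*} [Ring A] [Algebra ℝ A] (ε : A →ₗ[ℝ] A) (ω : A) (P : ℕ → Prop)
  [DecidablePred P]

/-- Meant for `P i` saying that the `A`-part of `γ i i` is exact, and `¬ P i` that its `y`-part
vanishes: every diagonal entry of the reduced system then lies in `A` or in `A y`. -/
def reducedSystem (γ : ℕ → ℕ → A × A) : ℕ → ℕ → A × A :=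
  bidiagSystem (fun i => if P i then (0, (γ i i).2) else γ i i)
    (fun i => if P i ∨ P (i + 1) then 0 else (γ i (i + 1)).2)

variable {D : ℕ → ℕ → ℕ} {γ : ℕ → ℕ → A × A} {m : ℕ}

theorem eD_reducedSystem_eq_masseySum
    (hsys : ∀ i j, 1 ≤ i → i ≤ j → j ≤ m → j ≤ i + 2 → eD ε ω (γ i j) = masseySum ε D γ i j)
    (hpure : ∀ i, 1 ≤ i → i ≤ m → ¬ P i → (γ i i).2 = 0) :
    ∀ i j, 1 ≤ i → i ≤ j → j ≤ m →
      eD ε ω (reducedSystem P γ i j) = masseySum ε D (reducedSystem P γ) i j := by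
  refine fun i j hi hij hj => eD_bidiagSystem_eq_masseySum ε ω (fun i hi him => ?_)
    (fun i hi him => ?_) (fun i hi him => ?_) hi hij hj
  · have h := hsys i i hi le_rfl him (by omega)
    rw [masseySum_self] at h
    split_ifs <;> simpa [eD] using h
  · have h := hsys i (i + 1) hi (by omega) him (by omega)
    rw [masseySum_succ] at h
    have hfst := congrArg Prod.fst h
    have hsnd := (congrArg Prod.snd h).symm
    simp only [eD, emul, Prod.smul_mk] at hfst hsnd
    simp at hsnd
    have h0 := hpure i hi (by omega)
    have h1 := hpure (i + 1) (by omega) him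
    clear hsys hpure h
    by_cases p0 : P i <;> by_cases p1 : P (i + 1) <;> simp_all [eD, emul]
  · have hsnd := (congrArg Prod.snd (hsys i (i + 2) hi (by omega) him (by omega))).symm
    simp only [masseySum_add_two, eD, emul, Prod.smul_mk, Prod.mk_add_mk] at hsnd
    have h0 := hpure i hi (by omega)
    have h2 := hpure (i + 2) (by omega) him
    clear hsys hpure
    by_cases p0 : P i <;> by_cases p1 : P (i + 1) <;> by_cases p2 : P (i + 2) <;>
      simp_all [emul]

lemma fst_reducedSystem_mem (M : ℕ → ℕ → Submodule ℝ A)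
    (h : ∀ i j, 1 ≤ i → i ≤ j → j ≤ m → (γ i j).1 ∈ M i j) :
    ∀ i j, 1 ≤ i → i ≤ j → j ≤ m → (reducedSystem P γ i j).1 ∈ M i j := by
  intro i j hi hij hj
  simp only [reducedSystem, bidiagSystem]
  split_ifs <;> first | exact zero_mem _ | subst_vars; exact h _ _ hi le_rfl hj

lemma snd_reducedSystem_mem (M : ℕ → ℕ → Submodule ℝ A)
    (h : ∀ i j, 1 ≤ i → i ≤ j → j ≤ m → (γ i j).2 ∈ M i j) :
    ∀ i j, 1 ≤ i → i ≤ j → j ≤ m → (reducedSystem P γ i j).2 ∈ M i j := by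
  intro i j hi hij hj
  simp only [reducedSystem, bidiagSystem]
  split_ifs <;> first | exact zero_mem _ | subst_vars; exact h _ _ hi (by omega) hj

lemma exists_reducedSystem_sub_eq_eD
    (hexact : ∀ i, 1 ≤ i → i ≤ m → P i → ∃ v, eD ε ω v = ((γ i i).1, 0))
    {i : ℕ} (hi : 1 ≤ i) (him : i ≤ m) :
    ∃ v, reducedSystem P γ i i - γ i i = eD ε ω v := by
  by_cases p : P i
  · obtain ⟨v, hv⟩ := hexact i hi him p
    simp only [eD, Prod.mk.injEq, and_true] at hv
    exact ⟨-v, by ext <;> simp [reducedSystem, bidiagSystem, p, eD, hv]⟩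
  · exact ⟨0, by simp [reducedSystem, bidiagSystem, p]⟩

end Reduction

theorem statement2_general {A : Type*} [Ring A] [Algebra ℝ A] (𝒜 : ℕ → Submodule ℝ A)
    [GradedAlgebra 𝒜] (n : ℕ) (ω : A) (hω : ω ∈ 𝒜 2)
    (hbound : ∀ i, 2 * n < i → 𝒜 i = ⊥)
    (hLef : ∀ k ≤ n, ∀ z ∈ 𝒜 (n + k), ∃! β, β ∈ 𝒜 (n - k) ∧ β * ω ^ k = z)
    (ε : A →ₗ[ℝ] A) (hε : ∀ i, ∀ v ∈ 𝒜 i, ε v = ((-1 : ℝ) ^ i) • v)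
    (m : ℕ) (hm : 4 ≤ m) (p : ℕ → ℕ) (hp : ∀ i, 0 < p i)
    (D : ℕ → ℕ → ℕ) (hD : ∀ i j, D i j = (∑ k ∈ Finset.Icc i j, p k) - (j - i))
    (γ : ℕ → ℕ → A × A)
    (hhom1 : ∀ i j, 1 ≤ i → i ≤ j → j ≤ m → (γ i j).1 ∈ 𝒜 (D i j))
    (hhom2 : ∀ i j, 1 ≤ i → i ≤ j → j ≤ m → (γ i j).2 ∈ 𝒜 (D i j - 1))
    (hsys : ∀ i j, 1 ≤ i → i ≤ j → j ≤ m → (i, j) ≠ (1, m) →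
      eD ε ω (γ i j) =
        ∑ k ∈ Finset.Ico i j, ((-1 : ℝ) ^ (D i k)) • emul ε (γ i k) (γ (k + 1) j)) :
    ∃ γ' : ℕ → ℕ → A × A,
      (∀ i j, 1 ≤ i → i ≤ j → j ≤ m → (γ' i j).1 ∈ 𝒜 (D i j)) ∧
      (∀ i j, 1 ≤ i → i ≤ j → j ≤ m → (γ' i j).2 ∈ 𝒜 (D i j - 1)) ∧
      -- `γ'` is a defining system for the same cohomology classes:
      (∀ i, 1 ≤ i → i ≤ m → ∃ v : A × A, γ' i i - γ i i = eD ε ω v) ∧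
      (∀ i j, 1 ≤ i → i ≤ j → j ≤ m → (i, j) ≠ (1, m) →
        eD ε ω (γ' i j) =
          ∑ k ∈ Finset.Ico i j, ((-1 : ℝ) ^ (D i k)) • emul ε (γ' i k) (γ' (k + 1) j)) ∧
      -- and its associated Massey cocycle is exact:
      ∃ w : A × A,
        ∑ k ∈ Finset.Ico 1 m, ((-1 : ℝ) ^ (D 1 k)) • emul ε (γ' 1 k) (γ' (k + 1) m) =
          eD ε ω w := by
  have hDii (i : ℕ) : D i i = p i := by simp [hD]
  have hsys_near : ∀ i j, 1 ≤ i → i ≤ j → j ≤ m → j ≤ i + 2 →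
      eD ε ω (γ i j) = masseySum ε D γ i j := fun i j hi hij hj hji =>
    hsys i j hi hij hj (by simp only [ne_eq, Prod.mk.injEq]; omega)
  have hpure (i : ℕ) (hi : 1 ≤ i) (him : i ≤ m) (hlow : ¬ n < D i i) : (γ i i).2 = 0 :=
    HardLefschetz.eq_zero_of_mul_eq_zero hLef (hhom2 i i hi le_rfl him)
      (by have := hp i; rw [hDii] at hlow ⊢; omega)
      (snd_mul_eq_zero_of_eD_eq_zero hε (hhom2 i i hi le_rfl him)
        ((hsys_near i i hi le_rfl him (by omega)).trans (masseySum_self ε D γ i)))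
  have hexact (i : ℕ) (hi : 1 ≤ i) (him : i ≤ m) (hhigh : n < D i i) :
      ∃ v, eD ε ω v = ((γ i i).1, 0) :=
    HardLefschetz.exists_eD_eq hLef hω hbound hε (hhom1 i i hi le_rfl him) hhigh
  have hdef := eD_reducedSystem_eq_masseySum ε ω (fun i => n < D i i) hsys_near hpure
  refine ⟨reducedSystem (fun i => n < D i i) γ, fst_reducedSystem_mem _ _ hhom1,
    snd_reducedSystem_mem _ _ hhom2,
    fun i hi him => exists_reducedSystem_sub_eq_eD ε ω _ hexact hi him,
    fun i j hi hij hj _ => hdef i j hi hij hj, _, (hdef 1 m le_rfl (by omega) le_rfl).symm⟩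

/-- Let `A = ⊕_{i=0}^{2n} Aⁱ` be a graded-commutative ℝ-algebra with zero
differential satisfying the hard Lefschetz property with respect to `ω ∈ A²`, and let
`(A ⊗ Λ(y), dy = ω)` be the elementary extension.  Then every defined higher-order Massey
product `⟨a₁, …, a_m⟩` with `m ≥ 4` of cohomology classes of `(A ⊗ Λ(y), d)` contains `0`:
given any defining system `γ` (with homogeneous entries `γ_{ij}` of the appropriate degrees
`D i j = Σ_{k=i}^{j} p_k - (j-i)`) there is a defining system `γ'` for the same classes whose
associated cocycle `Σ_{k=1}^{m-1} (-1)^{|γ'_{1k}|} γ'_{1k}·γ'_{k+1,m}` is exact. -/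
theorem statement2 {A : Type*} [Ring A] [Algebra ℝ A] (𝒜 : ℕ → Submodule ℝ A)
    [GradedAlgebra 𝒜] (n : ℕ) (ω : A) (hω : ω ∈ 𝒜 2)
    (hbound : ∀ i, 2 * n < i → 𝒜 i = ⊥)
    (hcomm : ∀ i j, ∀ u ∈ 𝒜 i, ∀ v ∈ 𝒜 j, u * v = ((-1 : ℝ) ^ (i * j)) • (v * u))
    (hLef : ∀ k ≤ n, ∀ z ∈ 𝒜 (n + k), ∃! β, β ∈ 𝒜 (n - k) ∧ β * ω ^ k = z)
    (ε : A →ₗ[ℝ] A) (hε : ∀ i, ∀ v ∈ 𝒜 i, ε v = ((-1 : ℝ) ^ i) • v)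
    (m : ℕ) (hm : 4 ≤ m) (p : ℕ → ℕ) (hp : ∀ i, 0 < p i)
    (D : ℕ → ℕ → ℕ) (hD : ∀ i j, D i j = (∑ k ∈ Finset.Icc i j, p k) - (j - i))
    (γ : ℕ → ℕ → A × A)
    (hhom1 : ∀ i j, 1 ≤ i → i ≤ j → j ≤ m → (γ i j).1 ∈ 𝒜 (D i j))
    (hhom2 : ∀ i j, 1 ≤ i → i ≤ j → j ≤ m → (γ i j).2 ∈ 𝒜 (D i j - 1))
    (hsys : ∀ i j, 1 ≤ i → i ≤ j → j ≤ m → (i, j) ≠ (1, m) →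
      eD ε ω (γ i j) =
        ∑ k ∈ Finset.Ico i j, ((-1 : ℝ) ^ (D i k)) • emul ε (γ i k) (γ (k + 1) j)) :
    ∃ γ' : ℕ → ℕ → A × A,
      (∀ i j, 1 ≤ i → i ≤ j → j ≤ m → (γ' i j).1 ∈ 𝒜 (D i j)) ∧
      (∀ i j, 1 ≤ i → i ≤ j → j ≤ m → (γ' i j).2 ∈ 𝒜 (D i j - 1)) ∧
      -- `γ'` is a defining system for the same cohomology classes:
      (∀ i, 1 ≤ i → i ≤ m → ∃ v : A × A, γ' i i - γ i i = eD ε ω v) ∧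
      (∀ i j, 1 ≤ i → i ≤ j → j ≤ m → (i, j) ≠ (1, m) →
        eD ε ω (γ' i j) =
          ∑ k ∈ Finset.Ico i j, ((-1 : ℝ) ^ (D i k)) • emul ε (γ' i k) (γ' (k + 1) j)) ∧
      -- and its associated Massey cocycle is exact:
      ∃ w : A × A,
        ∑ k ∈ Finset.Ico 1 m, ((-1 : ℝ) ^ (D 1 k)) • emul ε (γ' 1 k) (γ' (k + 1) m) =
          eD ε ω w :=
  statement2_general 𝒜 n ω hω hbound hLef ε hε m hm p hp D hD γ hhom1 hhom2 hsys
end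

section
/- Let (ΛV, d) be the free graded commutative DGA over ℝ on generators a, b of degree 2 and x, y, z of degree 3, with differential da = db = 0, dx = a², dy = b², dz = e·(a·b) for a nonzero integer e. Then the element ν = a·z − x·b is closed but not exact; consequently the triple Massey product ⟨[a],[a],[b]⟩ is defined and does not contain 0. -/
/-!
Degree 4 is spanned by the cocycles `a², ab, b²`, and the degree-5 part of `d w` is `d` of the
degree-4 part of `w`; so the only exact element of degree 5 is zero, and `ν ≠ 0` is not exact.
On degree 3 the differential is injective (it sends `x, y, z` to the independent `a², b², e·ab`),
so the defining system of `⟨[a],[a],[b]⟩` is forced to be `(x, z/e)`, there are no nonzero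
`3`-cocycles to produce indeterminacy, and the Massey product is the single class `[ν]/e ≠ 0`.
-/

open DirectSum

section GradedDifferential

variable {R M : Type*} [Semiring R] [AddCommMonoid M] [Module R M]
  {𝒜 : ℕ → Submodule R M} [Decomposition 𝒜] {d : M →ₗ[R] M}

theorem decompose_map_succ_of_degree_one (hdeg : ∀ i, ∀ v ∈ 𝒜 i, d v ∈ 𝒜 (i + 1))
    (n : ℕ) (w : M) : (decompose 𝒜 (d w) (n + 1) : M) = d (decompose 𝒜 w n) := by
  induction w using Decomposition.inductionOn 𝒜 with
  | zero => simp
  | @homogeneous i m =>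
    by_cases hin : i = n
    · subst hin
      rw [decompose_of_mem_same 𝒜 m.2, decompose_of_mem_same 𝒜 (hdeg i m m.2)]
    · rw [decompose_of_mem_ne 𝒜 m.2 hin, decompose_of_mem_ne 𝒜 (hdeg i m m.2) (by omega),
        map_zero]
  | add u v hu hv =>
    simp only [map_add, decompose_add, DirectSum.add_apply, Submodule.coe_add, hu, hv]

theorem eq_zero_of_eq_map_of_ker_le (hdeg : ∀ i, ∀ v ∈ 𝒜 i, d v ∈ 𝒜 (i + 1)) {n : ℕ}
    (hker : 𝒜 n ≤ LinearMap.ker d) {v w : M} (hv : v ∈ 𝒜 (n + 1)) (hw : d w = v) : v = 0 := by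
  rw [← decompose_of_mem_same 𝒜 hv, ← hw, decompose_map_succ_of_degree_one hdeg]
  exact hker (decompose 𝒜 w n).2

end GradedDifferential

theorem LinearMap.injOn_span_triple {K M N : Type*} [Field K] [AddCommGroup M] [Module K M]
    [AddCommGroup N] [Module K N] (f : M →ₗ[K] N) {x y z : M} {p q r : N} {c : K} (hc : c ≠ 0)
    (hx : f x = p) (hz : f z = c • q) (hy : f y = r) (hli : LinearIndependent K ![p, q, r]) :
    Set.InjOn f (Submodule.span K {x, y, z}) := by
  have hli' : LinearIndependent K (f ∘ ![x, z, y]) := by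
    convert hli.units_smul ![1, Units.mk0 c hc, 1] using 1
    ext i; fin_cases i <;> simp [hx, hy, hz]
  have hspan : ({x, y, z} : Set M) = Set.range ![x, z, y] := by
    ext
    simp only [Set.mem_insert_iff, Set.mem_singleton_iff, Matrix.range_cons, Matrix.range_empty,
      Set.union_empty, Set.singleton_union]
    tauto
  rw [hspan]
  exact injOn_of_disjoint_ker le_rfl (Submodule.range_ker_disjoint hli')

theorem zero_notMem_massey_of_injOn {K A : Type*} [Field K] [Ring A] [Algebra K A]
    {V : Submodule K A} {d : A →ₗ[K] A} (hinj : Set.InjOn d V) {a b x z : A} {c : K}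
    (hc : c ≠ 0) (hx : x ∈ V) (hz : z ∈ V) (hdx : d x = a * a) (hdz : d z = c • (a * b))
    (hν : ¬ ∃ w : A, d w = a * z - c • (x * b)) (a12 a23 : A) (h12 : a12 ∈ V) (h23 : a23 ∈ V)
    (hd12 : d a12 = a * a) (hd23 : d a23 = a * b) :
    ¬ ∃ h1 h2 w : A, h1 ∈ V ∧ h2 ∈ V ∧ d h1 = 0 ∧ d h2 = 0 ∧
      a * a23 - a12 * b = a * h1 + h2 * b + d w := by
  rintro ⟨h1, h2, w, h1_mem, h2_mem, hdh1, hdh2, heq⟩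
  obtain rfl : h1 = 0 := hinj h1_mem V.zero_mem (by rw [hdh1, map_zero])
  obtain rfl : h2 = 0 := hinj h2_mem V.zero_mem (by rw [hdh2, map_zero])
  obtain rfl : a12 = x := hinj h12 hx (hd12.trans hdx.symm)
  obtain rfl : a23 = c⁻¹ • z := hinj h23 (V.smul_mem _ hz) (by
    rw [hd23, map_smul, hdz, smul_smul, inv_mul_cancel₀ hc, one_smul])
  refine hν ⟨c • w, ?_⟩
  rw [mul_zero, zero_mul, zero_add, zero_add, mul_smul_comm] at heq
  rw [map_smul, ← heq, smul_sub, smul_smul, mul_inv_cancel₀ hc, one_smul]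

theorem statement7_general {A : Type*} [Ring A] [Algebra ℝ A] (𝒜 : ℕ → Submodule ℝ A)
    [GradedAlgebra 𝒜] (d : A →ₗ[ℝ] A)
    (hdeg : ∀ i, ∀ v ∈ 𝒜 i, d v ∈ 𝒜 (i + 1))
    (hLeib : ∀ i, ∀ u ∈ 𝒜 i, ∀ v : A, d (u * v) = d u * v + ((-1 : ℝ) ^ i) • (u * d v))
    (e : ℤ) (he : e ≠ 0)
    (a b x y z : A)
    (ha : a ∈ 𝒜 2) (hb : b ∈ 𝒜 2) (hx : x ∈ 𝒜 3) (hz : z ∈ 𝒜 3)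
    (hda : d a = 0) (hdb : d b = 0)
    (hdx : d x = a * a) (hdy : d y = b * b) (hdz : d z = (e : ℝ) • (a * b))
    -- freeness of `ΛV` in degrees 3, 4 and 5:
    (h3 : 𝒜 3 = Submodule.span ℝ {x, y, z})
    (h4 : 𝒜 4 = Submodule.span ℝ {a * a, a * b, b * b})
    (hli4 : LinearIndependent ℝ ![a * a, a * b, b * b])
    (hli5 : LinearIndependent ℝ ![a * z, x * b]) :
    d (a * z - (e : ℝ) • (x * b)) = 0 ∧
    (¬ ∃ w : A, d w = a * z - (e : ℝ) • (x * b)) ∧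
    (∃ a12 ∈ 𝒜 3, ∃ a23 ∈ 𝒜 3, d a12 = a * a ∧ d a23 = a * b) ∧
    (∀ a12 a23 : A, a12 ∈ 𝒜 3 → a23 ∈ 𝒜 3 → d a12 = a * a → d a23 = a * b →
      ¬ ∃ h1 h2 w : A, h1 ∈ 𝒜 3 ∧ h2 ∈ 𝒜 3 ∧ d h1 = 0 ∧ d h2 = 0 ∧
        a * a23 - a12 * b = a * h1 + h2 * b + d w) := by
  have hE : (e : ℝ) ≠ 0 := Int.cast_ne_zero.mpr he
  have hclosed : d (a * z - (e : ℝ) • (x * b)) = 0 := by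
    rw [map_sub, map_smul, hLeib 2 a ha z, hLeib 3 x hx b, hda, hdb, hdx, hdz]
    simp [mul_assoc]
  have hd4 : 𝒜 4 ≤ LinearMap.ker d := by
    rw [h4, Submodule.span_le]
    rintro _ (rfl | rfl | rfl) <;> simp [hLeib 2 _ ha, hLeib 2 _ hb, hda, hdb]
  have hν5 : a * z - (e : ℝ) • (x * b) ∈ 𝒜 5 :=
    sub_mem (SetLike.mul_mem_graded ha hz) (Submodule.smul_mem _ _ (SetLike.mul_mem_graded hx hb))
  have hν0 : a * z - (e : ℝ) • (x * b) ≠ 0 := by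
    simpa [sub_eq_add_neg, ← neg_smul] using
      (LinearIndependent.pair_iff.mp hli5 1 (-(e : ℝ))).mt (by simp [hE])
  have hnotexact : ¬ ∃ w : A, d w = a * z - (e : ℝ) • (x * b) :=
    fun ⟨_, hw⟩ ↦ hν0 (eq_zero_of_eq_map_of_ker_le hdeg hd4 hν5 hw)
  have hinj : Set.InjOn d (𝒜 3) := h3 ▸ LinearMap.injOn_span_triple d hE hdx hdz hdy hli4
  refine ⟨hclosed, hnotexact, ⟨x, hx, (e : ℝ)⁻¹ • z, Submodule.smul_mem _ _ hz, hdx, ?_⟩,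
    zero_notMem_massey_of_injOn hinj hE hx hz hdx hdz hnotexact⟩
  rw [map_smul, hdz, smul_smul, inv_mul_cancel₀ hE, one_smul]

/-- Let `(ΛV, d)` be the free graded-commutative DGA on generators `a, b` of
degree 2 and `x, y, z` of degree 3 with `da = db = 0`, `dx = a²`, `dy = b²`, `dz = e·(a·b)`,
`e ≠ 0` (the freeness in the relevant degrees is axiomatized by the span and linear
independence hypotheses below, which hold in the free algebra).  Then `ν = a·z − e·(x·b)` is
closed but not exact; consequently the triple Massey product `⟨[a],[a],[b]⟩` is defined and
does not contain `0`. -/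
theorem statement7 {A : Type*} [Ring A] [Algebra ℝ A] (𝒜 : ℕ → Submodule ℝ A)
    [GradedAlgebra 𝒜] (d : A →ₗ[ℝ] A)
    (hd2 : ∀ v, d (d v) = 0)
    (hdeg : ∀ i, ∀ v ∈ 𝒜 i, d v ∈ 𝒜 (i + 1))
    (hLeib : ∀ i, ∀ u ∈ 𝒜 i, ∀ v : A, d (u * v) = d u * v + ((-1 : ℝ) ^ i) • (u * d v))
    (hcomm : ∀ i j, ∀ u ∈ 𝒜 i, ∀ v ∈ 𝒜 j, u * v = ((-1 : ℝ) ^ (i * j)) • (v * u))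
    (e : ℤ) (he : e ≠ 0)
    (a b x y z : A)
    (ha : a ∈ 𝒜 2) (hb : b ∈ 𝒜 2) (hx : x ∈ 𝒜 3) (hy : y ∈ 𝒜 3) (hz : z ∈ 𝒜 3)
    (hda : d a = 0) (hdb : d b = 0)
    (hdx : d x = a * a) (hdy : d y = b * b) (hdz : d z = (e : ℝ) • (a * b))
    -- freeness of `ΛV` in degrees 3, 4 and 5:
    (h3 : 𝒜 3 = Submodule.span ℝ {x, y, z})
    (h4 : 𝒜 4 = Submodule.span ℝ {a * a, a * b, b * b})
    (hli4 : LinearIndependent ℝ ![a * a, a * b, b * b])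
    (hli5 : LinearIndependent ℝ ![a * z, x * b]) :
    d (a * z - (e : ℝ) • (x * b)) = 0 ∧
    (¬ ∃ w : A, d w = a * z - (e : ℝ) • (x * b)) ∧
    (∃ a12 ∈ 𝒜 3, ∃ a23 ∈ 𝒜 3, d a12 = a * a ∧ d a23 = a * b) ∧
    (∀ a12 a23 : A, a12 ∈ 𝒜 3 → a23 ∈ 𝒜 3 → d a12 = a * a → d a23 = a * b →
      ¬ ∃ h1 h2 w : A, h1 ∈ 𝒜 3 ∧ h2 ∈ 𝒜 3 ∧ d h1 = 0 ∧ d h2 = 0 ∧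
        a * a23 - a12 * b = a * h1 + h2 * b + d w) :=
  statement7_general 𝒜 d hdeg hLeib e he a b x y z ha hb hx hz hda hdb hdx hdy hdz h3 h4 hli4 hli5
end

section
/- Let (ΛV, d) be the free DGA on generators a1, a2 of degree 1, b of degree 2, c of degree 3, with da_i = db = 0 and dc = b². Consider the DGA Λ(a1,a2,b,c) ⊗ Λ(a3) where a3 has degree 1 and d a3 = a1·a2 + b. Then its cohomology is isomorphic as a graded algebra to the cohomology of (Λ(a1, a2, x), 0) with |a_i| = 1, |x| = 3, i.e., the minimal model of this extension is (Λ(a1, a2, x), 0). -/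
/-!
Put `b' = b + a₁a₂ = d a₃` and `x = c + a₁a₂a₃ - a₃b`, which is closed. In these variables `A`
splits as `Λ(a₁, a₂, x) ⊗ Λ(a₃, b')` with `d a₃ = b'`, and the second factor is contractible.
Hence `φ : α_i ↦ a_i, χ ↦ x` has a linear retraction `π` with `π ∘ d = 0` and a homotopy `h`
with `dh + hd = 1 - φπ`. Written in the monomial basis of `A`, `π` and `h` are given by short
explicit formulas, and both identities are checked basis vector by basis vector.
-/

open Module

section GradedCommutative

variable {R A : Type*} [CommRing R] [Ring A] [Algebra R A]

def GradedCommutative (𝒜 : ℕ → Submodule R A) : Prop :=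
  ∀ i j, ∀ u ∈ 𝒜 i, ∀ v ∈ 𝒜 j, u * v = ((-1 : R) ^ (i * j)) • (v * u)

structure IsExteriorTriple (p q r : A) : Prop where
  mul_self_left : p * p = 0
  mul_self_mid : q * q = 0
  mul_self_right : r * r = 0
  anticomm_mid_left : q * p = -(p * q)
  anticomm_right_left : r * p = -(p * r)
  anticomm_right_mid : r * q = -(q * r)

namespace GradedCommutative

variable {𝒜 : ℕ → Submodule R A} {i j k : ℕ} {u v : A}

theorem mul_comm_of_odd (h𝒜 : GradedCommutative 𝒜) (hu : u ∈ 𝒜 i) (hv : v ∈ 𝒜 j)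
    (hij : Odd (i * j)) : v * u = -(u * v) := by
  rw [h𝒜 i j u hu v hv, hij.neg_one_pow, neg_one_smul, neg_neg]

theorem mul_self_eq_zero_of_odd [Invertible (2 : R)] (h𝒜 : GradedCommutative 𝒜)
    (hu : u ∈ 𝒜 i) (hi : Odd i) : u * u = 0 := by
  have h : (2 : R) • (u * u) = 0 := by
    rw [two_smul]
    nth_rewrite 1 [h𝒜.mul_comm_of_odd hu hu (hi.mul hi)]
    exact neg_add_cancel _
  rw [← one_smul R (u * u), ← invOf_mul_self (2 : R), mul_smul, h, smul_zero]

theorem isExteriorTriple [Invertible (2 : R)] (h𝒜 : GradedCommutative 𝒜) {p q r : A}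
    (hp : p ∈ 𝒜 i) (hq : q ∈ 𝒜 j) (hr : r ∈ 𝒜 k) (hi : Odd i) (hj : Odd j) (hk : Odd k) :
    IsExteriorTriple p q r where
  mul_self_left := h𝒜.mul_self_eq_zero_of_odd hp hi
  mul_self_mid := h𝒜.mul_self_eq_zero_of_odd hq hj
  mul_self_right := h𝒜.mul_self_eq_zero_of_odd hr hk
  anticomm_mid_left := h𝒜.mul_comm_of_odd hp hq (hi.mul hj)
  anticomm_right_left := h𝒜.mul_comm_of_odd hp hr (hi.mul hk)
  anticomm_right_mid := h𝒜.mul_comm_of_odd hq hr (hj.mul hk)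

end GradedCommutative

end GradedCommutative

section GradedDerivation

variable {R A : Type*} [CommRing R] [Ring A] [Algebra R A]

def IsGradedDerivation (𝒜 : ℕ → Submodule R A) (d : A →ₗ[R] A) : Prop :=
  ∀ i, ∀ u ∈ 𝒜 i, ∀ v : A, d (u * v) = d u * v + ((-1 : R) ^ i) • (u * d v)

namespace IsGradedDerivation

variable {𝒜 : ℕ → Submodule R A} {d : A →ₗ[R] A} {i : ℕ} {u : A}

theorem map_one_eq_zero [SetLike.GradedOne 𝒜] (hd : IsGradedDerivation 𝒜 d) : d 1 = 0 := by
  have h := hd 0 1 SetLike.GradedOne.one_mem 1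
  simp only [mul_one, one_mul, pow_zero, one_smul] at h
  exact left_eq_add.mp h

theorem map_mul_of_closed (hd : IsGradedDerivation 𝒜 d) (hu : u ∈ 𝒜 i) (hdu : d u = 0)
    (v : A) : d (u * v) = ((-1 : R) ^ i) • (u * d v) := by
  rw [hd i u hu v, hdu, zero_mul, zero_add]

theorem map_pow_of_closed [SetLike.GradedOne 𝒜] (hd : IsGradedDerivation 𝒜 d) (hu : u ∈ 𝒜 i)
    (hdu : d u = 0) (k : ℕ) : d (u ^ k) = 0 := by
  induction k with
  | zero => rw [pow_zero, hd.map_one_eq_zero]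
  | succ k ih => rw [pow_succ', hd.map_mul_of_closed hu hdu, ih, mul_zero, smul_zero]

end IsGradedDerivation

end GradedDerivation

section ExteriorMonomial

variable {R A B : Type*} [CommRing R] [Ring A] [Algebra R A] [Ring B] [Algebra R B]

def extMonomial (p q r : A) (e : Fin 2 × Fin 2 × Fin 2) : A :=
  p ^ (e.1 : ℕ) * q ^ (e.2.1 : ℕ) * r ^ (e.2.2 : ℕ)

-- The sign of `p^i₁ q^i₂ r^i₃ · p^j₁ q^j₂ r^j₃` in `Λ(p, q, r)`, or `0` when a generator repeats;
-- in the latter case the exponent `i + j`, computed in `Fin 2`, is meaningless.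
def extSign (i j : Fin 2 × Fin 2 × Fin 2) : R :=
  if (i.1 : ℕ) + j.1 ≤ 1 ∧ (i.2.1 : ℕ) + j.2.1 ≤ 1 ∧ (i.2.2 : ℕ) + j.2.2 ≤ 1 then
    (-1) ^ ((j.1 : ℕ) * ((i.2.1 : ℕ) + i.2.2) + (j.2.1 : ℕ) * i.2.2) else 0

theorem extMonomial_zero (p q r : A) : extMonomial p q r 0 = 1 := by
  simp [extMonomial]

theorem extMonomial_mem {𝒜 : ℕ → Submodule R A} [SetLike.GradedMonoid 𝒜] {p q r : A}
    {i j k : ℕ} (hp : p ∈ 𝒜 i) (hq : q ∈ 𝒜 j) (hr : r ∈ 𝒜 k) (e : Fin 2 × Fin 2 × Fin 2) :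
    extMonomial p q r e ∈ 𝒜 ((e.1 : ℕ) * i + (e.2.1 : ℕ) * j + (e.2.2 : ℕ) * k) := by
  simpa only [extMonomial, smul_eq_mul] using SetLike.mul_mem_graded (SetLike.mul_mem_graded
    (SetLike.pow_mem_graded _ hp) (SetLike.pow_mem_graded _ hq)) (SetLike.pow_mem_graded _ hr)

theorem IsGradedDerivation.map_extMonomial {𝒜 : ℕ → Submodule R A} [SetLike.GradedMonoid 𝒜]
    {d : A →ₗ[R] A} (hd : IsGradedDerivation 𝒜 d) {p q r : A} {i j k : ℕ} (hp : p ∈ 𝒜 i)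
    (hq : q ∈ 𝒜 j) (hr : r ∈ 𝒜 k) (hdp : d p = 0) (hdq : d q = 0) (hdr : d r = 0)
    (e : Fin 2 × Fin 2 × Fin 2) : d (extMonomial p q r e) = 0 := by
  have hdpq : d (p ^ (e.1 : ℕ) * q ^ (e.2.1 : ℕ)) = 0 := by
    rw [hd.map_mul_of_closed (SetLike.pow_mem_graded _ hp) (hd.map_pow_of_closed hp hdp _),
      hd.map_pow_of_closed hq hdq, mul_zero, smul_zero]
  rw [extMonomial, hd.map_mul_of_closed (SetLike.mul_mem_graded (SetLike.pow_mem_graded _ hp)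
    (SetLike.pow_mem_graded _ hq)) hdpq, hd.map_pow_of_closed hr hdr, mul_zero, smul_zero]

theorem IsExteriorTriple.extMonomial_mul {p q r : A} (h : IsExteriorTriple p q r)
    (i j : Fin 2 × Fin 2 × Fin 2) :
    extMonomial p q r i * extMonomial p q r j =
      extSign (R := R) i j • extMonomial p q r (i + j) := by
  have hp : ∀ t : A, p * (p * t) = 0 := fun t => by rw [← mul_assoc, h.mul_self_left, zero_mul]
  have hq : ∀ t : A, q * (q * t) = 0 := fun t => by rw [← mul_assoc, h.mul_self_mid, zero_mul]
  have hr : ∀ t : A, r * (r * t) = 0 := fun t => by rw [← mul_assoc, h.mul_self_right, zero_mul]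
  have hqp : ∀ t : A, q * (p * t) = -(p * (q * t)) := fun t => by
    rw [← mul_assoc, h.anticomm_mid_left, neg_mul, mul_assoc]
  have hrp : ∀ t : A, r * (p * t) = -(p * (r * t)) := fun t => by
    rw [← mul_assoc, h.anticomm_right_left, neg_mul, mul_assoc]
  have hrq : ∀ t : A, r * (q * t) = -(q * (r * t)) := fun t => by
    rw [← mul_assoc, h.anticomm_right_mid, neg_mul, mul_assoc]
  obtain ⟨i1, i2, i3⟩ := i
  obtain ⟨j1, j2, j3⟩ := j
  fin_cases i1 <;> fin_cases i2 <;> fin_cases i3 <;> fin_cases j1 <;> fin_cases j2 <;>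
    fin_cases j3 <;>
  · simp only [extMonomial, extSign]
    norm_num [mul_assoc, h.mul_self_left, h.mul_self_mid, h.mul_self_right, h.anticomm_mid_left,
      h.anticomm_right_left, h.anticomm_right_mid, hp, hq, hr, hqp, hrp, hrq]

theorem Module.Basis.constr_mul {ι : Type*} (b : Basis ι R B) (f : ι → A) (c : ι → ι → R)
    (m : ι → ι → ι) (hb : ∀ i j, b i * b j = c i j • b (m i j))
    (hf : ∀ i j, f i * f j = c i j • f (m i j)) (u v : B) :
    b.constr R f (u * v) = b.constr R f u * b.constr R f v := by
  have hbil : (LinearMap.mul R B).compr₂ (b.constr R f) =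
      (LinearMap.mul R A).compl₁₂ (b.constr R f) (b.constr R f) :=
    b.ext fun i => b.ext fun j => by simp [hb, hf]
  simpa using DFunLike.congr_fun (DFunLike.congr_fun hbil u) v

noncomputable def Module.Basis.exteriorLift (b : Basis (Fin 2 × Fin 2 × Fin 2) R B)
    {α₁ α₂ χ : B} (hb : ∀ e, b e = extMonomial α₁ α₂ χ e) (hB : IsExteriorTriple α₁ α₂ χ)
    {p q r : A} (hA : IsExteriorTriple p q r) : B →ₐ[R] A :=
  AlgHom.ofLinearMap (b.constr R (extMonomial p q r))
    (by rw [← extMonomial_zero α₁ α₂ χ, ← hb, Basis.constr_basis, extMonomial_zero])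
    (b.constr_mul _ extSign (· + ·) (fun i j => by simpa only [hb] using hB.extMonomial_mul i j)
      hA.extMonomial_mul)

theorem Module.Basis.exteriorLift_basis (b : Basis (Fin 2 × Fin 2 × Fin 2) R B)
    {α₁ α₂ χ : B} (hb : ∀ e, b e = extMonomial α₁ α₂ χ e) (hB : IsExteriorTriple α₁ α₂ χ)
    {p q r : A} (hA : IsExteriorTriple p q r) (e : Fin 2 × Fin 2 × Fin 2) :
    b.exteriorLift hb hB hA (b e) = extMonomial p q r e :=
  b.constr_basis R _ e

end ExteriorMonomial

theorem Module.Basis.map_mem_of_map_basis_mem {R M N ι κ : Type*} [CommRing R] [AddCommGroup M]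
    [Module R M] [AddCommGroup N] [Module R N] [DecidableEq ι] {ℳ : ι → Submodule R M}
    [DirectSum.Decomposition ℳ] {𝒩 : ι → Submodule R N} (b : Basis κ R M) {deg : κ → ι}
    (hb : ∀ t, b t ∈ ℳ (deg t)) {f : M →ₗ[R] N} (hf : ∀ t, f (b t) ∈ 𝒩 (deg t)) {i : ι} {w : M}
    (hw : w ∈ ℳ i) : f w ∈ 𝒩 i := by
  let P : M →ₗ[R] M := (ℳ i).subtype ∘ₗ DirectSum.component R ι (fun j => ℳ j) i ∘ₗ
    (DirectSum.decomposeLinearEquiv ℳ).toLinearMap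
  have hP : ∀ {j} {v : M}, v ∈ ℳ j → P v = if j = i then v else 0 := by
    intro j v hv
    split_ifs with h
    · subst h
      simp [P, DirectSum.decomposeLinearEquiv_apply, ← DirectSum.apply_eq_component,
        DirectSum.decompose_of_mem_same ℳ hv]
    · simp [P, DirectSum.decomposeLinearEquiv_apply, ← DirectSum.apply_eq_component,
        DirectSum.decompose_of_mem_ne ℳ hv h]
  have hspan : ⊤ ≤ (𝒩 i).comap (f ∘ₗ P) := by
    rw [← b.span_eq, Submodule.span_le]
    rintro _ ⟨t, rfl⟩
    simp only [SetLike.mem_coe, Submodule.mem_comap, LinearMap.comp_apply, hP (hb t)]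
    split_ifs with h
    · exact h ▸ hf t
    · simp
  simpa [hP hw] using hspan (Submodule.mem_top (x := w))

section CircleBundleModel

variable {A B : Type*} [Ring A] [Algebra ℝ A] [Ring B] [Algebra ℝ B]

structure IsCircleBundleModel (𝒜 : ℕ → Submodule ℝ A) (d : A →ₗ[ℝ] A) (a1 a2 a3 b c : A)
    (basA : Basis (Fin 2 × Fin 2 × Fin 2 × ℕ × Fin 2) ℝ A) : Prop where
  leibniz : IsGradedDerivation 𝒜 d
  comm : GradedCommutative 𝒜
  a1_mem : a1 ∈ 𝒜 1
  a2_mem : a2 ∈ 𝒜 1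
  a3_mem : a3 ∈ 𝒜 1
  b_mem : b ∈ 𝒜 2
  c_mem : c ∈ 𝒜 3
  d_a1 : d a1 = 0
  d_a2 : d a2 = 0
  d_b : d b = 0
  d_c : d c = b * b
  d_a3 : d a3 = a1 * a2 + b
  basis_eq : ∀ q, basA q = a1 ^ (q.1 : ℕ) * a2 ^ (q.2.1 : ℕ) * a3 ^ (q.2.2.1 : ℕ) *
    b ^ q.2.2.2.1 * c ^ (q.2.2.2.2 : ℕ)

def monomialDegree (q : Fin 2 × Fin 2 × Fin 2 × ℕ × Fin 2) : ℕ :=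
  q.1 + q.2.1 + q.2.2.1 + q.2.2.2.1 * 2 + q.2.2.2.2 * 3

def cocycleX (a1 a2 a3 b c : A) : A := c + a1 * (a2 * a3) - a3 * b

-- `π` and `h` kill or contract the factor `Λ(a₃, b')`; the terms with `(1, 1, …)` come from
-- rewriting `b' = b + a₁a₂` in the basis, e.g. `π b = π (b' - a₁a₂) = -α₁α₂`.
noncomputable def retractionValue (basB : Basis (Fin 2 × Fin 2 × Fin 2) ℝ B) :
    Fin 2 × Fin 2 × Fin 2 × ℕ × Fin 2 → B
  | (e1, e2, 0, 0, e4) => basB (e1, e2, e4)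
  | (0, 0, 0, 1, e4) => -basB (1, 1, e4)
  | _ => 0

noncomputable def homotopyValue (basA : Basis (Fin 2 × Fin 2 × Fin 2 × ℕ × Fin 2) ℝ A) :
    Fin 2 × Fin 2 × Fin 2 × ℕ × Fin 2 → A
  | (0, 0, 0, k + 2, e4) => basA (0, 0, 1, k + 1, e4) - basA (1, 1, 1, k, e4)
  | (e1, e2, 0, k + 1, e4) => ((-1 : ℝ) ^ ((e1 : ℕ) + e2)) • basA (e1, e2, 1, k, e4)
  | _ => 0

noncomputable def retraction (basA : Basis (Fin 2 × Fin 2 × Fin 2 × ℕ × Fin 2) ℝ A)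
    (basB : Basis (Fin 2 × Fin 2 × Fin 2) ℝ B) : A →ₗ[ℝ] B :=
  basA.constr ℝ (retractionValue basB)

noncomputable def homotopy (basA : Basis (Fin 2 × Fin 2 × Fin 2 × ℕ × Fin 2) ℝ A) : A →ₗ[ℝ] A :=
  basA.constr ℝ (homotopyValue basA)

namespace IsCircleBundleModel

variable {𝒜 : ℕ → Submodule ℝ A} {d : A →ₗ[ℝ] A} {a1 a2 a3 b c : A}
  {basA : Basis (Fin 2 × Fin 2 × Fin 2 × ℕ × Fin 2) ℝ A}

theorem isExteriorTriple (H : IsCircleBundleModel 𝒜 d a1 a2 a3 b c basA) :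
    IsExteriorTriple a1 a2 a3 :=
  H.comm.isExteriorTriple H.a1_mem H.a2_mem H.a3_mem odd_one odd_one odd_one

theorem basis_mem [SetLike.GradedMonoid 𝒜] (H : IsCircleBundleModel 𝒜 d a1 a2 a3 b c basA)
    (q : Fin 2 × Fin 2 × Fin 2 × ℕ × Fin 2) : basA q ∈ 𝒜 (monomialDegree q) := by
  rw [H.basis_eq]
  simpa only [monomialDegree, smul_eq_mul, mul_one] using
    SetLike.mul_mem_graded (SetLike.mul_mem_graded (SetLike.mul_mem_graded
      (SetLike.mul_mem_graded (SetLike.pow_mem_graded _ H.a1_mem)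
        (SetLike.pow_mem_graded _ H.a2_mem)) (SetLike.pow_mem_graded _ H.a3_mem))
      (SetLike.pow_mem_graded _ H.b_mem)) (SetLike.pow_mem_graded _ H.c_mem)

theorem d_a1_mul (H : IsCircleBundleModel 𝒜 d a1 a2 a3 b c basA) (v : A) :
    d (a1 * v) = -(a1 * d v) := by
  rw [H.leibniz.map_mul_of_closed H.a1_mem H.d_a1, pow_one, neg_one_smul]

theorem d_a2_mul (H : IsCircleBundleModel 𝒜 d a1 a2 a3 b c basA) (v : A) :
    d (a2 * v) = -(a2 * d v) := by
  rw [H.leibniz.map_mul_of_closed H.a2_mem H.d_a2, pow_one, neg_one_smul]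

theorem d_pow_b [SetLike.GradedOne 𝒜] (H : IsCircleBundleModel 𝒜 d a1 a2 a3 b c basA) (k : ℕ) :
    d (b ^ k) = 0 :=
  H.leibniz.map_pow_of_closed H.b_mem H.d_b k

theorem d_a3_mul_pow_b [SetLike.GradedOne 𝒜] (H : IsCircleBundleModel 𝒜 d a1 a2 a3 b c basA)
    (k : ℕ) : d (a3 * b ^ k) = a1 * (a2 * b ^ k) + b ^ (k + 1) := by
  rw [H.leibniz 1 a3 H.a3_mem, H.d_a3, H.d_pow_b, mul_zero, smul_zero, add_zero, add_mul,
    mul_assoc, ← pow_succ']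

theorem d_pow_b_mul_c [SetLike.GradedMonoid 𝒜] (H : IsCircleBundleModel 𝒜 d a1 a2 a3 b c basA)
    (k : ℕ) : d (b ^ k * c) = b ^ (k + 2) := by
  rw [H.leibniz.map_mul_of_closed (SetLike.pow_mem_graded k H.b_mem) (H.d_pow_b k), H.d_c,
    smul_eq_mul, pow_mul', neg_one_sq, one_pow, one_smul, ← mul_assoc, ← pow_succ, ← pow_succ]

theorem d_a3_mul_pow_b_mul_c [SetLike.GradedMonoid 𝒜]
    (H : IsCircleBundleModel 𝒜 d a1 a2 a3 b c basA) (k : ℕ) :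
    d (a3 * (b ^ k * c)) = a1 * (a2 * (b ^ k * c)) + b ^ (k + 1) * c - a3 * b ^ (k + 2) := by
  rw [H.leibniz 1 a3 H.a3_mem, H.d_a3, H.d_pow_b_mul_c, add_mul, mul_assoc, ← mul_assoc b,
    ← pow_succ', pow_one, neg_one_smul, ← sub_eq_add_neg]

theorem d_basis_b [SetLike.GradedOne 𝒜] (H : IsCircleBundleModel 𝒜 d a1 a2 a3 b c basA)
    (e1 e2 : Fin 2) (k : ℕ) : d (basA (e1, e2, 0, k, 0)) = 0 := by
  fin_cases e1 <;> fin_cases e2 <;>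
    simp [H.basis_eq, mul_assoc, H.d_a1_mul, H.d_a2_mul, H.d_pow_b]

theorem d_basis_a3b [SetLike.GradedOne 𝒜] (H : IsCircleBundleModel 𝒜 d a1 a2 a3 b c basA)
    (e1 e2 : Fin 2) (k : ℕ) :
    d (basA (e1, e2, 1, k, 0)) = ((-1 : ℝ) ^ ((e1 : ℕ) + e2)) •
      ((if e1 = 0 ∧ e2 = 0 then basA (1, 1, 0, k, 0) else 0) + basA (e1, e2, 0, k + 1, 0)) := by
  have h := H.isExteriorTriple
  fin_cases e1 <;> fin_cases e2 <;>
    simp [H.basis_eq, mul_assoc, H.d_a1_mul, H.d_a2_mul, H.d_a3_mul_pow_b, mul_add,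
      ← mul_assoc a2 a1, ← mul_assoc a1 a1, ← mul_assoc a2 a2, h.mul_self_left, h.mul_self_mid,
      h.anticomm_mid_left]

theorem d_basis_bc [SetLike.GradedMonoid 𝒜] (H : IsCircleBundleModel 𝒜 d a1 a2 a3 b c basA)
    (e1 e2 : Fin 2) (k : ℕ) :
    d (basA (e1, e2, 0, k, 1)) = ((-1 : ℝ) ^ ((e1 : ℕ) + e2)) • basA (e1, e2, 0, k + 2, 0) := by
  fin_cases e1 <;> fin_cases e2 <;>
    simp [H.basis_eq, mul_assoc, H.d_a1_mul, H.d_a2_mul, H.d_pow_b_mul_c]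

theorem d_basis_a3bc [SetLike.GradedMonoid 𝒜] (H : IsCircleBundleModel 𝒜 d a1 a2 a3 b c basA)
    (e1 e2 : Fin 2) (k : ℕ) :
    d (basA (e1, e2, 1, k, 1)) = ((-1 : ℝ) ^ ((e1 : ℕ) + e2)) •
      ((if e1 = 0 ∧ e2 = 0 then basA (1, 1, 0, k, 1) else 0) + basA (e1, e2, 0, k + 1, 1) -
        basA (e1, e2, 1, k + 2, 0)) := by
  have h := H.isExteriorTriple
  fin_cases e1 <;> fin_cases e2 <;>
    simp [H.basis_eq, mul_assoc, H.d_a1_mul, H.d_a2_mul, H.d_a3_mul_pow_b_mul_c, mul_add,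
      mul_sub, ← mul_assoc a2 a1, ← mul_assoc a1 a1, ← mul_assoc a2 a2, h.mul_self_left,
      h.mul_self_mid, h.anticomm_mid_left]

theorem cocycleX_mem [SetLike.GradedMul 𝒜] (H : IsCircleBundleModel 𝒜 d a1 a2 a3 b c basA) :
    cocycleX a1 a2 a3 b c ∈ 𝒜 3 :=
  sub_mem (add_mem H.c_mem (SetLike.mul_mem_graded H.a1_mem
    (SetLike.mul_mem_graded H.a2_mem H.a3_mem))) (SetLike.mul_mem_graded H.a3_mem H.b_mem)

theorem d_cocycleX (H : IsCircleBundleModel 𝒜 d a1 a2 a3 b c basA) :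
    d (cocycleX a1 a2 a3 b c) = 0 := by
  have h := H.isExteriorTriple
  rw [cocycleX, map_sub, map_add, H.d_c, H.d_a1_mul, H.d_a2_mul, H.d_a3, H.leibniz 1 a3 H.a3_mem,
    H.d_a3, H.d_b]
  simp only [mul_add, add_mul, ← mul_assoc, h.anticomm_mid_left, h.mul_self_left, neg_mul,
    mul_neg, zero_mul, mul_zero, smul_zero]
  abel

theorem isExteriorTriple_cocycleX [SetLike.GradedMul 𝒜]
    (H : IsCircleBundleModel 𝒜 d a1 a2 a3 b c basA) :
    IsExteriorTriple a1 a2 (cocycleX a1 a2 a3 b c) :=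
  H.comm.isExteriorTriple H.a1_mem H.a2_mem H.cocycleX_mem odd_one odd_one (by decide)

theorem extMonomial_cocycleX (H : IsCircleBundleModel 𝒜 d a1 a2 a3 b c basA)
    (e1 e2 e4 : Fin 2) :
    extMonomial a1 a2 (cocycleX a1 a2 a3 b c) (e1, e2, e4) = basA (e1, e2, 0, 0, e4) +
      (if e1 = 0 ∧ e2 = 0 ∧ e4 = 1 then basA (1, 1, 1, 0, 0) else 0) -
      (if e4 = 1 then basA (e1, e2, 1, 1, 0) else 0) := by
  have h := H.isExteriorTriple
  fin_cases e1 <;> fin_cases e2 <;> fin_cases e4 <;>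
    simp [extMonomial, cocycleX, H.basis_eq, mul_assoc, mul_add, mul_sub,
      ← mul_assoc a2 a1, ← mul_assoc a1 a1, ← mul_assoc a2 a2, h.mul_self_left, h.mul_self_mid,
      h.anticomm_mid_left]

theorem retraction_leftInverse (H : IsCircleBundleModel 𝒜 d a1 a2 a3 b c basA)
    {basB : Basis (Fin 2 × Fin 2 × Fin 2) ℝ B} {φ : B →ₗ[ℝ] A}
    (hφ : ∀ e, φ (basB e) = extMonomial a1 a2 (cocycleX a1 a2 a3 b c) e) :
    Function.LeftInverse (retraction basA basB) φ := by
  suffices h : retraction basA basB ∘ₗ φ = LinearMap.id from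
    fun w => by simpa using DFunLike.congr_fun h w
  refine basB.ext fun ⟨e1, e2, e4⟩ => ?_
  rw [LinearMap.comp_apply, hφ, H.extMonomial_cocycleX]
  fin_cases e1 <;> fin_cases e2 <;> fin_cases e4 <;> simp [retraction, retractionValue]

theorem d_map_eq_zero [SetLike.GradedMonoid 𝒜] (H : IsCircleBundleModel 𝒜 d a1 a2 a3 b c basA)
    {basB : Basis (Fin 2 × Fin 2 × Fin 2) ℝ B} {φ : B →ₗ[ℝ] A}
    (hφ : ∀ e, φ (basB e) = extMonomial a1 a2 (cocycleX a1 a2 a3 b c) e) (w : B) :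
    d (φ w) = 0 := by
  suffices h : d ∘ₗ φ = 0 from by simpa using DFunLike.congr_fun h w
  refine basB.ext fun e => ?_
  rw [LinearMap.comp_apply, hφ, LinearMap.zero_apply]
  exact H.leibniz.map_extMonomial H.a1_mem H.a2_mem H.cocycleX_mem H.d_a1 H.d_a2 H.d_cocycleX e

theorem retraction_d [SetLike.GradedMonoid 𝒜] (H : IsCircleBundleModel 𝒜 d a1 a2 a3 b c basA)
    (basB : Basis (Fin 2 × Fin 2 × Fin 2) ℝ B) (a : A) : retraction basA basB (d a) = 0 := by
  suffices h : retraction basA basB ∘ₗ d = 0 from by simpa using DFunLike.congr_fun h a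
  refine basA.ext fun ⟨e1, e2, e3, k, e4⟩ => ?_
  rcases k with _ | _ | k <;> fin_cases e3 <;> fin_cases e4 <;> fin_cases e1 <;> fin_cases e2 <;>
    simp [H.d_basis_b, H.d_basis_a3b, H.d_basis_bc, H.d_basis_a3bc, retraction, retractionValue]

theorem homotopy_formula [SetLike.GradedMonoid 𝒜] (H : IsCircleBundleModel 𝒜 d a1 a2 a3 b c basA)
    {basB : Basis (Fin 2 × Fin 2 × Fin 2) ℝ B} {φ : B →ₗ[ℝ] A}
    (hφ : ∀ e, φ (basB e) = extMonomial a1 a2 (cocycleX a1 a2 a3 b c) e) (a : A) :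
    d (homotopy basA a) + homotopy basA (d a) + φ (retraction basA basB a) = a := by
  suffices h : d ∘ₗ homotopy basA + homotopy basA ∘ₗ d + φ ∘ₗ retraction basA basB =
      LinearMap.id from by simpa using DFunLike.congr_fun h a
  refine basA.ext fun ⟨e1, e2, e3, k, e4⟩ => ?_
  rcases k with _ | _ | k <;> fin_cases e3 <;> fin_cases e4 <;> fin_cases e1 <;> fin_cases e2 <;>
    simp [H.d_basis_b, H.d_basis_a3b, H.d_basis_bc, H.d_basis_a3bc, H.extMonomial_cocycleX, hφ,
      retraction, retractionValue, homotopy, homotopyValue, smul_sub]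
  all_goals abel

theorem retraction_mem [SetLike.GradedMonoid 𝒜] [DirectSum.Decomposition 𝒜]
    (H : IsCircleBundleModel 𝒜 d a1 a2 a3 b c basA) {ℬ : ℕ → Submodule ℝ B}
    {basB : Basis (Fin 2 × Fin 2 × Fin 2) ℝ B}
    (hB : ∀ e, basB e ∈ ℬ ((e.1 : ℕ) * 1 + (e.2.1 : ℕ) * 1 + (e.2.2 : ℕ) * 3)) {k : ℕ} {a : A}
    (ha : a ∈ 𝒜 k) : retraction basA basB a ∈ ℬ k := by
  refine basA.map_mem_of_map_basis_mem H.basis_mem (fun q => ?_) ha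
  rw [retraction, Basis.constr_basis]
  unfold retractionValue
  split
  next e1 e2 e4 => simpa [monomialDegree] using hB (e1, e2, e4)
  next e4 => simpa [monomialDegree] using neg_mem (hB (1, 1, e4))
  next => exact zero_mem _

end IsCircleBundleModel

end CircleBundleModel

theorem statement17_general {A : Type*} [Ring A] [Algebra ℝ A] (𝒜 : ℕ → Submodule ℝ A)
    [GradedAlgebra 𝒜] (d : A →ₗ[ℝ] A)
    (hLeib : ∀ i, ∀ u ∈ 𝒜 i, ∀ v : A, d (u * v) = d u * v + ((-1 : ℝ) ^ i) • (u * d v))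
    (hcommA : ∀ i j, ∀ u ∈ 𝒜 i, ∀ v ∈ 𝒜 j, u * v = ((-1 : ℝ) ^ (i * j)) • (v * u))
    (a1 a2 a3 b c : A)
    (ha1 : a1 ∈ 𝒜 1) (ha2 : a2 ∈ 𝒜 1) (ha3 : a3 ∈ 𝒜 1) (hb : b ∈ 𝒜 2) (hc : c ∈ 𝒜 3)
    (hda1 : d a1 = 0) (hda2 : d a2 = 0) (hdb : d b = 0)
    (hdc : d c = b * b) (hda3 : d a3 = a1 * a2 + b)
    -- monomial basis of `Λ(a₁, a₂, b, c) ⊗ Λ(a₃)`: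
    (basA : Module.Basis (Fin 2 × Fin 2 × Fin 2 × ℕ × Fin 2) ℝ A)
    (hbasA : ∀ q : Fin 2 × Fin 2 × Fin 2 × ℕ × Fin 2,
      basA q = a1 ^ (q.1 : ℕ) * a2 ^ (q.2.1 : ℕ) * a3 ^ (q.2.2.1 : ℕ) *
        b ^ q.2.2.2.1 * c ^ (q.2.2.2.2 : ℕ))
    {B : Type*} [Ring B] [Algebra ℝ B] (ℬ : ℕ → Submodule ℝ B) [GradedAlgebra ℬ]
    (hcommB : ∀ i j, ∀ u ∈ ℬ i, ∀ v ∈ ℬ j, u * v = ((-1 : ℝ) ^ (i * j)) • (v * u))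
    (α1 α2 χ : B) (hα1 : α1 ∈ ℬ 1) (hα2 : α2 ∈ ℬ 1) (hχ : χ ∈ ℬ 3)
    -- monomial basis of `Λ(α₁, α₂, χ)`:
    (basB : Module.Basis (Fin 2 × Fin 2 × Fin 2) ℝ B)
    (hbasB : ∀ q : Fin 2 × Fin 2 × Fin 2,
      basB q = α1 ^ (q.1 : ℕ) * α2 ^ (q.2.1 : ℕ) * χ ^ (q.2.2 : ℕ)) :
    ∃ φ : B →ₐ[ℝ] A,
      -- `φ` preserves degrees,
      (∀ k, ∀ w ∈ ℬ k, φ w ∈ 𝒜 k) ∧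
      -- `φ` is a morphism of DGAs (`B` has zero differential),
      (∀ w : B, d (φ w) = 0) ∧
      -- `φ` is injective on cohomology,
      (∀ w : B, (∃ u : A, φ w = d u) → w = 0) ∧
      -- and surjective on cohomology:
      (∀ k, ∀ z ∈ 𝒜 k, d z = 0 → ∃ w ∈ ℬ k, ∃ u : A, z = φ w + d u) := by
  have H : IsCircleBundleModel 𝒜 d a1 a2 a3 b c basA :=
    ⟨hLeib, hcommA, ha1, ha2, ha3, hb, hc, hda1, hda2, hdb, hdc, hda3, hbasA⟩
  have hB : IsExteriorTriple α1 α2 χ :=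
    GradedCommutative.isExteriorTriple hcommB hα1 hα2 hχ odd_one odd_one (by decide)
  let φ := basB.exteriorLift hbasB hB H.isExteriorTriple_cocycleX
  have hφ : ∀ e, φ (basB e) = extMonomial a1 a2 (cocycleX a1 a2 a3 b c) e :=
    basB.exteriorLift_basis hbasB hB H.isExteriorTriple_cocycleX
  have hbasB_mem : ∀ e, basB e ∈ ℬ ((e.1 : ℕ) * 1 + (e.2.1 : ℕ) * 1 + (e.2.2 : ℕ) * 3) :=
    fun e => hbasB e ▸ extMonomial_mem hα1 hα2 hχ e
  refine ⟨φ, fun k w hw => ?_, fun w => ?_, ?_, fun k z hz hdz => ?_⟩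
  · exact basB.map_mem_of_map_basis_mem (f := φ.toLinearMap) hbasB_mem
      (fun e => (hφ e).symm ▸ extMonomial_mem ha1 ha2 H.cocycleX_mem e) hw
  · exact H.d_map_eq_zero (φ := φ.toLinearMap) hφ w
  · rintro w ⟨u, hu⟩
    rw [← H.retraction_leftInverse (φ := φ.toLinearMap) hφ w]
    exact (congrArg _ hu).trans (H.retraction_d basB u)
  · refine ⟨retraction basA basB z, H.retraction_mem hbasB_mem hz, homotopy basA z, ?_⟩
    have h := H.homotopy_formula (φ := φ.toLinearMap) hφ z
    rw [hdz, map_zero, add_zero] at h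
    rw [add_comm]
    exact h.symm

/-- Let `(A, d)` be the DGA `Λ(a₁, a₂, b, c) ⊗ Λ(a₃)` with `|a₁| = |a₂| =
|a₃| = 1`, `|b| = 2`, `|c| = 3`, `da₁ = da₂ = db = 0`, `dc = b²`, `da₃ = a₁a₂ + b`
(freeness being encoded by the monomial basis `a₁^{ε₁} a₂^{ε₂} a₃^{ε₃} b^k c^{ε₄}`), and let
`(B, 0)` be the minimal DGA `Λ(α₁, α₂, χ)` with `|α₁| = |α₂| = 1`, `|χ| = 3` and zero
differential (with monomial basis `α₁^{ε₁} α₂^{ε₂} χ^{ε₃}`).  Then there is a morphism of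
graded algebras `φ : B → A` landing in closed elements and inducing an isomorphism on
cohomology; i.e. the cohomology of `A` is isomorphic as a graded algebra to that of
`(Λ(a₁, a₂, x), 0)`, which is therefore the minimal model of the extension. -/
theorem statement17 {A : Type*} [Ring A] [Algebra ℝ A] (𝒜 : ℕ → Submodule ℝ A)
    [GradedAlgebra 𝒜] (d : A →ₗ[ℝ] A)
    (hd2 : ∀ v, d (d v) = 0)
    (hdeg : ∀ i, ∀ v ∈ 𝒜 i, d v ∈ 𝒜 (i + 1))
    (hLeib : ∀ i, ∀ u ∈ 𝒜 i, ∀ v : A, d (u * v) = d u * v + ((-1 : ℝ) ^ i) • (u * d v))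
    (hcommA : ∀ i j, ∀ u ∈ 𝒜 i, ∀ v ∈ 𝒜 j, u * v = ((-1 : ℝ) ^ (i * j)) • (v * u))
    (a1 a2 a3 b c : A)
    (ha1 : a1 ∈ 𝒜 1) (ha2 : a2 ∈ 𝒜 1) (ha3 : a3 ∈ 𝒜 1) (hb : b ∈ 𝒜 2) (hc : c ∈ 𝒜 3)
    (hda1 : d a1 = 0) (hda2 : d a2 = 0) (hdb : d b = 0)
    (hdc : d c = b * b) (hda3 : d a3 = a1 * a2 + b)
    -- monomial basis of `Λ(a₁, a₂, b, c) ⊗ Λ(a₃)`: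
    (basA : Module.Basis (Fin 2 × Fin 2 × Fin 2 × ℕ × Fin 2) ℝ A)
    (hbasA : ∀ q : Fin 2 × Fin 2 × Fin 2 × ℕ × Fin 2,
      basA q = a1 ^ (q.1 : ℕ) * a2 ^ (q.2.1 : ℕ) * a3 ^ (q.2.2.1 : ℕ) *
        b ^ q.2.2.2.1 * c ^ (q.2.2.2.2 : ℕ))
    {B : Type*} [Ring B] [Algebra ℝ B] (ℬ : ℕ → Submodule ℝ B) [GradedAlgebra ℬ]
    (hcommB : ∀ i j, ∀ u ∈ ℬ i, ∀ v ∈ ℬ j, u * v = ((-1 : ℝ) ^ (i * j)) • (v * u))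
    (α1 α2 χ : B) (hα1 : α1 ∈ ℬ 1) (hα2 : α2 ∈ ℬ 1) (hχ : χ ∈ ℬ 3)
    -- monomial basis of `Λ(α₁, α₂, χ)`:
    (basB : Module.Basis (Fin 2 × Fin 2 × Fin 2) ℝ B)
    (hbasB : ∀ q : Fin 2 × Fin 2 × Fin 2,
      basB q = α1 ^ (q.1 : ℕ) * α2 ^ (q.2.1 : ℕ) * χ ^ (q.2.2 : ℕ)) :
    ∃ φ : B →ₐ[ℝ] A,
      -- `φ` preserves degrees,
      (∀ k, ∀ w ∈ ℬ k, φ w ∈ 𝒜 k) ∧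
      -- `φ` is a morphism of DGAs (`B` has zero differential),
      (∀ w : B, d (φ w) = 0) ∧
      -- `φ` is injective on cohomology,
      (∀ w : B, (∃ u : A, φ w = d u) → w = 0) ∧
      -- and surjective on cohomology:
      (∀ k, ∀ z ∈ 𝒜 k, d z = 0 → ∃ w ∈ ℬ k, ∃ u : A, z = φ w + d u) :=
  statement17_general 𝒜 d hLeib hcommA a1 a2 a3 b c ha1 ha2 ha3 hb hc hda1 hda2 hdb hdc hda3 basA
    hbasA ℬ hcommB α1 α2 χ hα1 hα2 hχ basB hbasB
end
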